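/- For the Gairing mechanism f* (as defined), the quantity 1 + max_{j∈[1,n-1]} max(j*f*(j) - f*(j+1), (n-1)*f*(n)) equals 1 + (n-1)*f*(n), i.e., for all j ∈ [1,n-1], j*f*(j) - f*(j+1) = (n-1)*f*(n). -/

import Mathlib

/-!
Write `f*(j) = (j-1)! T(j) / T(1)` with the tail `T(j) = 1/((n-1)(n-1)!) + Σ_{i=j}^{n-1} 1/i!`.
Since `j (j-1)! = j!` and `T(j) - T(j+1) = 1/j!`, one gets `j f*(j) - f*(j+1) = 1/T(1)`;
and `T(n) = 1/((n-1)(n-1)!)` gives `(n-1) f*(n) = 1/T(1)` as well.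
-/

/-- The Gairing optimal covering mechanism. -/
noncomputable def gairing (n j : ℕ) : ℝ :=
  (Nat.factorial (j - 1) : ℝ) *
    (1 / (((n - 1 : ℕ) : ℝ) * (Nat.factorial (n - 1) : ℝ)) +
      ∑ i ∈ Finset.Icc j (n - 1), (1 : ℝ) / (Nat.factorial i : ℝ)) /
    (1 / (((n - 1 : ℕ) : ℝ) * (Nat.factorial (n - 1) : ℝ)) +
      ∑ i ∈ Finset.Icc 1 (n - 1), (1 : ℝ) / (Nat.factorial i : ℝ))

open Finset

noncomputable def gairingTail (n j : ℕ) : ℝ :=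
  1 / (((n - 1 : ℕ) : ℝ) * ((n - 1).factorial : ℝ)) + ∑ i ∈ Icc j (n - 1), 1 / (i.factorial : ℝ)

theorem gairing_eq (n j : ℕ) :
    gairing n j = (j - 1).factorial * gairingTail n j / gairingTail n 1 := rfl

theorem gairingTail_eq_add_gairingTail_succ {n j : ℕ} (hj : j ≤ n - 1) :
    gairingTail n j = 1 / (j.factorial : ℝ) + gairingTail n (j + 1) := by
  rw [gairingTail, gairingTail, Icc_eq_cons_Ioc hj, sum_cons, ← Icc_add_one_left_eq_Ioc]
  ring

theorem gairingTail_self {n : ℕ} (hn : 1 ≤ n) :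
    gairingTail n n = 1 / (((n - 1 : ℕ) : ℝ) * ((n - 1).factorial : ℝ)) := by
  rw [gairingTail, Icc_eq_empty (by omega), sum_empty, add_zero]

theorem mul_gairing_sub_gairing_succ {n j : ℕ} (hj₁ : 1 ≤ j) (hj₂ : j ≤ n - 1) :
    (j : ℝ) * gairing n j - gairing n (j + 1) = 1 / gairingTail n 1 := by
  have hfact : (j : ℝ) * (j - 1).factorial = j.factorial := by
    exact_mod_cast Nat.mul_factorial_pred (by omega)
  have hfact_ne : (j.factorial : ℝ) ≠ 0 := by positivity
  rw [gairing_eq, gairing_eq, Nat.add_sub_cancel, gairingTail_eq_add_gairingTail_succ hj₂,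
    ← mul_div_assoc, ← mul_assoc, hfact]
  field_simp
  ring

theorem sub_one_mul_gairing_self {n : ℕ} (hn : 2 ≤ n) :
    ((n : ℝ) - 1) * gairing n n = 1 / gairingTail n 1 := by
  have hcast : (n : ℝ) - 1 = ((n - 1 : ℕ) : ℝ) := by rw [Nat.cast_sub (by omega), Nat.cast_one]
  have hpos : (0 : ℝ) < ((n - 1 : ℕ) : ℝ) := by exact_mod_cast (by omega : 0 < n - 1)
  rw [gairing_eq, gairingTail_self (by omega), hcast]
  field_simp

theorem stmt_13 (n : ℕ) (hn : 2 ≤ n) :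
    (∀ j, 1 ≤ j → j ≤ n - 1 →
      (j : ℝ) * gairing n j - gairing n (j + 1) = ((n : ℝ) - 1) * gairing n n) ∧
    1 + (Finset.Icc 1 (n - 1)).sup'
        (Finset.nonempty_Icc.mpr (by omega))
        (fun j => max ((j : ℝ) * gairing n j - gairing n (j + 1))
          (((n : ℝ) - 1) * gairing n n)) =
      1 + ((n : ℝ) - 1) * gairing n n := by
  have tight : ∀ j, 1 ≤ j → j ≤ n - 1 →
      (j : ℝ) * gairing n j - gairing n (j + 1) = ((n : ℝ) - 1) * gairing n n :=
    fun j hj₁ hj₂ => (mul_gairing_sub_gairing_succ hj₁ hj₂).trans (sub_one_mul_gairing_self hn).symm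
  refine ⟨tight, ?_⟩
  congr 1
  rw [sup'_congr _ rfl fun j hj => by rw [tight j (mem_Icc.1 hj).1 (mem_Icc.1 hj).2, max_self]]
  exact sup'_const _ _
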